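/- For any binary linear code C ⊆ F_2^{2n}, the 2-level Construction C* constellation Γ_{C*} = {ψ(c_1) + 2ψ(c_2) + 4z : (c_1, c_2) ∈ C, z ∈ Z^n} is geometrically uniform. -/

import Mathlib

/-- The natural embedding of `F_2^n` into `ℝ^n` (Euclidean space). -/
noncomputable def psiR {n : ℕ} (c : Fin n → ZMod 2) : EuclideanSpace ℝ (Fin n) :=
  WithLp.toLp 2 (fun i => ((c i).val : ℝ))

/-- The natural embedding of `ℤ^n` into `ℝ^n` (Euclidean space). -/
noncomputable def embZ {n : ℕ} (z : Fin n → ℤ) : EuclideanSpace ℝ (Fin n) :=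
  WithLp.toLp 2 (fun i => (z i : ℝ))

/-- The 2-level Construction C* constellation built from a linear main code
`C ⊆ F_2^{2n}`, codewords split into two length-`n` halves `(c₁, c₂)`:
`Γ_{C*} = {ψ(c₁) + 2ψ(c₂) + 4z}`. -/
noncomputable def gammaCStar2 {n : ℕ}
    (C : Submodule (ZMod 2) ((Fin n → ZMod 2) × (Fin n → ZMod 2))) :
    Set (EuclideanSpace ℝ (Fin n)) :=
  {v | ∃ c ∈ C, ∃ z : Fin n → ℤ, v = psiR c.1 + (2 : ℝ) • psiR c.2 + (4 : ℝ) • embZ z}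

/-!
A point of `Γ_{C*}` is an integer vector whose coordinates, read modulo `4`, have their two
binary digits forming a codeword of `C`. The isometry `t ↦ (-1)^s t + s` of `ℝ` (`s ∈ ℤ`)
acts on these two digits as addition of the digits of `s`: translation by `2` flips the
second digit, the reflection `t ↦ 1 - t` only the first. Coordinatewise such maps send any
integer point `a` to any other `b`; when `a, b ∈ Γ_{C*}` the digits of `s` are the difference
of two codewords, so by linearity of `C` the map preserves `Γ_{C*}`.
-/
def twist (s t : ℤ) : ℤ := if Even s then t + s else -t + s

lemma exists_twist_eq (a b : ℤ) : ∃ s, twist s a = b := by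
  by_cases h : Even (a + b)
  · refine ⟨b - a, ?_⟩
    rw [twist, if_pos (by simpa [Int.even_sub, Int.even_add, Iff.comm] using h)]
    ring
  · exact ⟨a + b, by rw [twist, if_neg h]; ring⟩

lemma twist_surjective (s : ℤ) : Function.Surjective (twist s) := by
  intro b
  by_cases h : Even s
  · exact ⟨b - s, by rw [twist, if_pos h]; ring⟩
  · exact ⟨s - b, by rw [twist, if_neg h]; ring⟩

lemma intCast_twist (s t : ℤ) : ((twist s t : ℤ) : ZMod 2) = t + s := by
  unfold twist
  split_ifs <;> push_cast <;> simp [ZMod.neg_eq_self_mod_two]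

lemma intCast_twist_div_two (s t : ℤ) :
    ((twist s t / 2 : ℤ) : ZMod 2) = ((t / 2 : ℤ) : ZMod 2) + ((s / 2 : ℤ) : ZMod 2) := by
  rw [← Int.cast_add, ZMod.intCast_eq_intCast_iff_dvd_sub]
  unfold twist
  split_ifs with h
  · obtain ⟨k, rfl⟩ := h
    omega
  · obtain ⟨k, rfl⟩ := Int.not_even_iff_odd.1 h
    omega

lemma intCast_val_add_two_mul_add_four_mul (a b : ZMod 2) (z : ℤ) :
    ((a.val + 2 * b.val + 4 * z : ℤ) : ZMod 2) = a ∧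
      (((a.val + 2 * b.val + 4 * z) / 2 : ℤ) : ZMod 2) = b := by
  have ha := a.val_lt
  have hb := b.val_lt
  constructor
  · conv_rhs => rw [← ZMod.natCast_zmod_val a, ← Int.cast_natCast]
    rw [ZMod.intCast_eq_intCast_iff_dvd_sub]
    omega
  · conv_rhs => rw [← ZMod.natCast_zmod_val b, ← Int.cast_natCast]
    rw [ZMod.intCast_eq_intCast_iff_dvd_sub]
    omega

lemma eq_val_add_two_mul_add_four_mul (t : ℤ) :
    t = (t : ZMod 2).val + 2 * ((t / 2 : ℤ) : ZMod 2).val + 4 * (t / 4) := by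
  have h₁ := ZMod.val_intCast (n := 2) t
  have h₂ := ZMod.val_intCast (n := 2) (t / 2)
  push_cast at h₁ h₂
  omega

section LowBits

variable {ι : Type*}

-- `/` is Euclidean division, so these are the digits of `t mod 4` also for negative `t`.
def lowBits (t : ι → ℤ) : (ι → ZMod 2) × (ι → ZMod 2) :=
  (fun i => (t i : ZMod 2), fun i => ((t i / 2 : ℤ) : ZMod 2))

lemma lowBits_twist (s t : ι → ℤ) :
    lowBits (fun i => twist (s i) (t i)) = lowBits t + lowBits s := by
  ext i
  · exact intCast_twist _ _
  · exact intCast_twist_div_two _ _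

lemma lowBits_val_add_two_mul_add_four_mul (c : (ι → ZMod 2) × (ι → ZMod 2))
    (z : ι → ℤ) :
    lowBits (fun i => (c.1 i).val + 2 * (c.2 i).val + 4 * z i) = c := by
  ext i
  · exact (intCast_val_add_two_mul_add_four_mul _ _ _).1
  · exact (intCast_val_add_two_mul_add_four_mul _ _ _).2

end LowBits

section TwistIsometry

variable {ι : Type*} [Fintype ι]

noncomputable def twistIsometry (s : ι → ℤ) :
    EuclideanSpace ℝ ι ≃ᵢ EuclideanSpace ℝ ι :=
  (LinearIsometryEquiv.piLpCongrRight 2 fun i =>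
      if Even (s i) then LinearIsometryEquiv.refl ℝ ℝ
      else LinearIsometryEquiv.neg ℝ).toIsometryEquiv.trans
    (IsometryEquiv.addRight (WithLp.toLp 2 fun i => (s i : ℝ)))

lemma twistIsometry_apply (s : ι → ℤ) (v : EuclideanSpace ℝ ι) (i : ι) :
    twistIsometry s v i = if Even (s i) then v i + s i else -v i + s i := by
  simp only [twistIsometry]
  split_ifs <;> simp [*]

end TwistIsometry

section Constellation

variable {n : ℕ} (C : Submodule (ZMod 2) ((Fin n → ZMod 2) × (Fin n → ZMod 2)))

lemma twistIsometry_embZ (s t : Fin n → ℤ) :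
    twistIsometry s (embZ t) = embZ fun i => twist (s i) (t i) := by
  ext i
  rw [twistIsometry_apply]
  simp only [embZ, twist]
  split_ifs <;> push_cast <;> rfl

lemma psiR_add_two_smul_add_four_smul_embZ (a b : Fin n → ZMod 2) (z : Fin n → ℤ) :
    psiR a + (2 : ℝ) • psiR b + (4 : ℝ) • embZ z =
      embZ fun i => (a i).val + 2 * (b i).val + 4 * z i := by
  ext i
  simp [psiR, embZ]

lemma mem_gammaCStar2_iff (v : EuclideanSpace ℝ (Fin n)) :
    v ∈ gammaCStar2 C ↔ ∃ t, embZ t = v ∧ lowBits t ∈ C := by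
  constructor
  · rintro ⟨c, hc, z, rfl⟩
    refine ⟨_, (psiR_add_two_smul_add_four_smul_embZ _ _ _).symm, ?_⟩
    rwa [lowBits_val_add_two_mul_add_four_mul]
  · rintro ⟨t, rfl, ht⟩
    refine ⟨lowBits t, ht, fun i => t i / 4, ?_⟩
    rw [psiR_add_two_smul_add_four_smul_embZ]
    exact congrArg embZ (funext fun i => eq_val_add_two_mul_add_four_mul (t i))

lemma twistIsometry_preimage_gammaCStar2 {s : Fin n → ℤ} (hs : lowBits s ∈ C) :
    twistIsometry s ⁻¹' gammaCStar2 C = gammaCStar2 C := by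
  ext v
  simp only [Set.mem_preimage, mem_gammaCStar2_iff]
  constructor
  · rintro ⟨t', ht', hC⟩
    choose t ht using fun i => twist_surjective (s i) (t' i)
    have htwist : (fun i => twist (s i) (t i)) = t' := funext ht
    refine ⟨t, (twistIsometry s).injective ?_, ?_⟩
    · rw [twistIsometry_embZ, htwist, ht']
    · rw [← htwist, lowBits_twist] at hC
      exact (C.add_mem_iff_left hs).1 hC
  · rintro ⟨t, rfl, ht⟩
    exact ⟨_, (twistIsometry_embZ s t).symm, lowBits_twist s t ▸ C.add_mem ht hs⟩

end Constellation

/-- For any binary linear code `C ⊆ F_2^{2n}`, the 2-level Construction C*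
constellation is geometrically uniform. -/
theorem constructionCStar_two_level_geometricallyUniform {n : ℕ}
    (C : Submodule (ZMod 2) ((Fin n → ZMod 2) × (Fin n → ZMod 2))) :
    ∀ x ∈ gammaCStar2 C, ∀ y ∈ gammaCStar2 C,
      ∃ T : EuclideanSpace ℝ (Fin n) ≃ᵢ EuclideanSpace ℝ (Fin n),
        T x = y ∧ T '' gammaCStar2 C = gammaCStar2 C := by
  intro x hx y hy
  obtain ⟨a, rfl, ha⟩ := (mem_gammaCStar2_iff C x).1 hx
  obtain ⟨b, rfl, hb⟩ := (mem_gammaCStar2_iff C y).1 hy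
  choose s hs using fun i => exists_twist_eq (a i) (b i)
  have hab : (fun i => twist (s i) (a i)) = b := funext hs
  have hsC : lowBits s ∈ C := by
    rw [← hab, lowBits_twist] at hb
    exact (C.add_mem_iff_right ha).1 hb
  refine ⟨twistIsometry s, by rw [twistIsometry_embZ, hab], ?_⟩
  conv_lhs => rw [← twistIsometry_preimage_gammaCStar2 C hsC]
  exact Set.image_preimage_eq _ (twistIsometry s).surjective
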